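/- arXiv:1605.08864 — 2 statements merged into one kernel-verified Lean document; each statement's English description precedes it below -/
import Mathlib

section
/- Let m ≥ 1 be a natural number, λ > 0 a real number, D : Fin m → Fin (m+1) → ℝ a function with D i x > 0 for all i and x, and P a probability mass function on Fin (m+1). For each x ∈ Fin (m+1), let ν_x be the product measure on ℝ^m (functions Fin m → ℝ) whose i-th factor is the exponential distribution with rate λ·D i x. Let μ be the measure on Fin (m+1) × (Fin m → ℝ) obtained by first sampling x according to P and then sampling t according to ν_x, i.e. μ is the bind of the measure induced by P with the kernel x ↦ (ν_x pushed forward by t ↦ (x, t)). Then the integral of the function (x, t) ↦ ∑_{i ∈ Fin m} t i with respect to μ equals (1/λ) · ∑_{x ∈ Fin (m+1)} ∑_{i ∈ Fin m} (1 / D i x) · P(x). -/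
/-!
Given the step `x` at which the SDN cluster is reached, the total time is a sum of exponential
variables, so by linearity its conditional mean is `∑ i, 1 / (λ * D i x)`; the mean `1 / r` of the
exponential law of rate `r` is the case `a = 1` of the Gamma integral `∫ x * gammaPDF a r x = a / r`.
Since `x` ranges over a finite set, the joint law is the finite mixture
`∑ x, P x • (ν x).map (x, ·)`, and averaging the conditional means against `P` gives the formula.
-/

open MeasureTheory ProbabilityTheory Real Set

namespace ProbabilityTheory

variable {a r : ℝ}

lemma integral_gammaPDFReal_mul_self (ha : 0 < a) (hr : 0 < r) :
    ∫ x, gammaPDFReal a r x * x = a / r := by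
  have hneg : ∀ x ∉ Ioi (0 : ℝ), gammaPDFReal a r x * x = 0 := by
    intro x (hx : ¬ 0 < x)
    rcases (not_lt.mp hx).lt_or_eq with hx | rfl
    · simp [gammaPDFReal, not_le.mpr hx]
    · exact mul_zero _
  have hpos : EqOn (fun x => gammaPDFReal a r x * x)
      (fun x => r ^ a / Gamma a * (x ^ (a + 1 - 1) * exp (-(r * x)))) (Ioi 0) := by
    intro x (hx : 0 < x)
    simp only [gammaPDFReal, if_pos hx.le, add_sub_cancel_right, rpow_sub_one hx.ne']
    field_simp
  rw [← setIntegral_eq_integral_of_forall_compl_eq_zero hneg,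
    setIntegral_congr_fun measurableSet_Ioi hpos, integral_const_mul,
    integral_rpow_mul_exp_neg_mul_Ioi (by linarith) hr, Gamma_add_one ha.ne',
    rpow_add_one' (by positivity) (by linarith : a + 1 ≠ 0)]
  have hΓ := (Gamma_pos_of_pos ha).ne'
  rw [div_rpow zero_le_one hr.le, one_rpow]
  field_simp

lemma integrable_gammaPDFReal_mul_self (ha : 0 < a) (hr : 0 < r) :
    Integrable fun x => gammaPDFReal a r x * x :=
  .of_integral_ne_zero <| by rw [integral_gammaPDFReal_mul_self ha hr]; positivity

lemma toReal_gammaPDF (ha : 0 < a) (hr : 0 < r) (x : ℝ) :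
    (gammaPDF a r x).toReal = gammaPDFReal a r x :=
  ENNReal.toReal_ofReal (gammaPDFReal_nonneg ha hr x)

lemma measurable_gammaPDF (a r : ℝ) : Measurable (gammaPDF a r) :=
  (measurable_gammaPDFReal a r).ennreal_ofReal

lemma integrable_id_gammaMeasure (ha : 0 < a) (hr : 0 < r) :
    Integrable id (gammaMeasure a r) := by
  rw [gammaMeasure, integrable_withDensity_iff_integrable_smul'
    (measurable_gammaPDF a r) (ae_of_all _ fun _ => ENNReal.ofReal_lt_top)]
  simpa only [toReal_gammaPDF ha hr, smul_eq_mul, id] using integrable_gammaPDFReal_mul_self ha hr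

lemma integral_id_gammaMeasure (ha : 0 < a) (hr : 0 < r) :
    ∫ x, x ∂gammaMeasure a r = a / r := by
  rw [gammaMeasure, integral_withDensity_eq_integral_toReal_smul
    (measurable_gammaPDF a r) (ae_of_all _ fun _ => ENNReal.ofReal_lt_top)]
  simpa only [toReal_gammaPDF ha hr, smul_eq_mul] using integral_gammaPDFReal_mul_self ha hr

lemma integrable_id_expMeasure (hr : 0 < r) : Integrable id (expMeasure r) :=
  integrable_id_gammaMeasure one_pos hr

lemma integral_id_expMeasure (hr : 0 < r) : ∫ x, x ∂expMeasure r = r⁻¹ :=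
  (integral_id_gammaMeasure one_pos hr).trans (one_div r)

end ProbabilityTheory

section Pi

variable {ι : Type*} [Fintype ι] {μ : ι → Measure ℝ} [∀ i, IsProbabilityMeasure (μ i)]

lemma integrable_eval_pi {i : ι} (h : Integrable id (μ i)) :
    Integrable (fun t : ι → ℝ => t i) (Measure.pi μ) :=
  (measurePreserving_eval μ i).integrable_comp_of_integrable h

lemma integrable_sum_pi (h : ∀ i, Integrable id (μ i)) :
    Integrable (fun t : ι → ℝ => ∑ i, t i) (Measure.pi μ) :=
  integrable_finsetSum _ fun i _ => integrable_eval_pi (h i)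

lemma integral_sum_pi (h : ∀ i, Integrable id (μ i)) :
    ∫ t, ∑ i, t i ∂Measure.pi μ = ∑ i, ∫ x, x ∂μ i := by
  rw [integral_finsetSum _ fun i _ => integrable_eval_pi (h i)]
  refine Finset.sum_congr rfl fun i _ => ?_
  rw [← (measurePreserving_eval μ i).map_eq]
  exact (integral_map (measurable_pi_apply (X := fun _ : ι => ℝ) i).aemeasurable
    aestronglyMeasurable_id).symm

end Pi

namespace PMF

variable {α β E : Type*} [Fintype α] [MeasurableSpace α] [MeasurableSingletonClass α]
  [MeasurableSpace β] [NormedAddCommGroup E] [NormedSpace ℝ E]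

lemma toMeasure_bind_eq_sum (p : PMF α) (κ : α → Measure β) :
    p.toMeasure.bind κ = ∑ a, p a • κ a := by
  ext s hs
  rw [Measure.bind_apply hs (measurable_of_countable κ).aemeasurable, lintegral_fintype,
    Measure.finsetSum_apply]
  refine Finset.sum_congr rfl fun a _ => ?_
  rw [p.toMeasure_apply_singleton a (measurableSet_singleton a), Measure.smul_apply, smul_eq_mul,
    mul_comm]

lemma integral_toMeasure_bind (p : PMF α) (κ : α → Measure β) {f : β → E}
    (hf : ∀ a, Integrable f (κ a)) :
    ∫ b, f b ∂p.toMeasure.bind κ = ∑ a, (p a).toReal • ∫ b, f b ∂κ a := by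
  rw [toMeasure_bind_eq_sum, integral_finsetSum_measure fun a _ =>
    (hf a).smul_measure (p.apply_ne_top a)]
  simp only [integral_smul_measure]

end PMF

theorem expected_bgp_convergence_time_general
    (m : ℕ) (lam : ℝ) (hlam : 0 < lam)
    (D : Fin m → Fin (m + 1) → ℝ) (hD : ∀ i x, 0 < D i x)
    (P : PMF (Fin (m + 1)))
    (ν : Fin (m + 1) → Measure (Fin m → ℝ))
    (hν : ∀ x, ν x = Measure.pi fun i => expMeasure (lam * D i x))
    (μ : Measure (Fin (m + 1) × (Fin m → ℝ)))
    (hμ : μ = P.toMeasure.bind fun x => (ν x).map fun t => (x, t)) :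
    ∫ p : Fin (m + 1) × (Fin m → ℝ), (∑ i, p.2 i) ∂μ =
      (1 / lam) * ∑ x, ∑ i, (1 / D i x) * (P x).toReal := by
  have hrate : ∀ x i, 0 < lam * D i x := fun x i => mul_pos hlam (hD i x)
  have hexp : ∀ x i, IsProbabilityMeasure (expMeasure (lam * D i x)) :=
    fun x i => isProbabilityMeasure_expMeasure (hrate x i)
  have hmean : ∀ x, ∫ t, ∑ i, t i ∂ν x = ∑ i, (lam * D i x)⁻¹ := fun x => by
    rw [hν, integral_sum_pi fun i => integrable_id_expMeasure (hrate x i)]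
    simp only [integral_id_expMeasure (hrate x _)]
  have hint : ∀ x, Integrable (fun p : Fin (m + 1) × (Fin m → ℝ) => ∑ i, p.2 i)
      ((ν x).map fun t => (x, t)) := fun x => by
    rw [(measurableEmbedding_prodMk_left x).integrable_map_iff, hν]
    exact integrable_sum_pi fun i => integrable_id_expMeasure (hrate x i)
  rw [hμ, PMF.integral_toMeasure_bind _ _ hint]
  simp only [(measurableEmbedding_prodMk_left _).integral_map, hmean, Finset.mul_sum, smul_eq_mul]
  refine Finset.sum_congr rfl fun x _ => Finset.sum_congr rfl fun i _ => ?_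
  field_simp

/-- Theorem 1 of the paper: the expected BGP convergence time in a hybrid SDN/BGP
inter-domain topology. The dissemination proceeds through `m = N - k` steps; given that the
SDN cluster receives the update at step `x` (distributed according to the PMF `P`), the
step durations are independent and step `i` is exponentially distributed with rate
`λ * D i x`.  The expected total time is `(1/λ) * ∑ x ∑ i (1 / D i x) * P x`. -/
theorem expected_bgp_convergence_time
    (m : ℕ) (hm : 1 ≤ m) (lam : ℝ) (hlam : 0 < lam)
    (D : Fin m → Fin (m + 1) → ℝ) (hD : ∀ i x, 0 < D i x)
    (P : PMF (Fin (m + 1)))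
    (ν : Fin (m + 1) → Measure (Fin m → ℝ))
    (hν : ∀ x, ν x = Measure.pi fun i => expMeasure (lam * D i x))
    (μ : Measure (Fin (m + 1) × (Fin m → ℝ)))
    (hμ : μ = P.toMeasure.bind fun x => (ν x).map fun t => (x, t)) :
    ∫ p : Fin (m + 1) × (Fin m → ℝ), (∑ i, p.2 i) ∂μ =
      (1 / lam) * ∑ x, ∑ i, (1 / D i x) * (P x).toReal :=
  expected_bgp_convergence_time_general m lam hlam D hD P ν hν μ hμ
end

section
/- Let N ≥ 1 and 1 ≤ k ≤ N be natural numbers, and let S be a subset of Fin N with |S| = k. Under the uniform probability distribution on the permutations σ of Fin N, for every natural number x with 0 ≤ x ≤ N−k, the probability of the event that the minimum of the set {σ⁻¹(s) : s ∈ S} of (0-indexed) positions occupied by elements of S equals x is P_sdn(x) = (k/(N−x)) · ∏_{j=0}^{x−1} (1 − k/(N−j)) (all arithmetic in ℝ; the empty product for x = 0 equals 1). -/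
/-!
The set `σ⁻¹(S)` of positions occupied by `S` is a uniformly distributed `k`-subset of `Fin N`:
permutations act transitively on `k`-subsets, so all fibres of `σ ↦ σ⁻¹(S)` have the same size.
Exactly `C(N-1-x, k-1)` of the `k`-subsets have least element `x`, and
`C(N-1-x, k-1) / C(N, k) = k/(N-x) · C(N-x, k) / C(N, k)`, where the last ratio telescopes into
`∏_{j<x} (1 - k/(N-j))`.
-/

open MeasureTheory Finset Equiv

theorem exists_perm_image_eq {α : Type*} [DecidableEq α] {s t : Finset α} (h : #s = #t) :
    ∃ τ : Perm α, s.image τ = t := by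
  have := Set.powersetCard.isPretransitive (α := α) (n := #t)
  obtain ⟨τ, hτ⟩ := MulAction.exists_smul_eq (Perm α) (⟨s, h⟩ : Set.powersetCard α #t) ⟨t, rfl⟩
  exact ⟨τ, by simpa [smul_finset_def, Perm.smul_def] using congrArg Subtype.val hτ⟩

section UniformSubset

variable {α : Type*} [Fintype α] [DecidableEq α]

theorem card_perm_image_symm_eq_of_card_eq (S : Finset α) {T T' : Finset α} (h : #T = #T') :
    #{σ : Perm α | S.image σ.symm = T} = #{σ : Perm α | S.image σ.symm = T'} := by
  obtain ⟨τ, rfl⟩ := exists_perm_image_eq h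
  refine card_equiv (Equiv.mulRight τ⁻¹) fun σ => ?_
  have : S.image (σ * τ⁻¹).symm = (S.image σ.symm).image τ := by
    rw [image_image]; rfl
  simp [this, (image_injective τ.injective).eq_iff]

theorem card_perm_filter_image_symm_eq_mul (S : Finset α) (P : Finset α → Prop) [DecidablePred P] :
    #{σ : Perm α | P (S.image σ.symm)} =
      #{T ∈ powersetCard #S univ | P T} * #{σ : Perm α | S.image σ.symm = S} := by
  have hmaps : Set.MapsTo (fun σ : Perm α => S.image σ.symm)
      ↑({σ : Perm α | P (S.image σ.symm)} : Finset _)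
      ↑({T ∈ powersetCard #S (univ : Finset α) | P T}) := by
    intro σ hσ
    simp_all [card_image_of_injective _ σ.symm.injective]
  rw [card_eq_sum_card_fiberwise hmaps, ← smul_eq_mul, ← sum_const]
  refine sum_congr rfl fun T hT => ?_
  rw [mem_filter, mem_powersetCard] at hT
  rw [filter_filter, ← card_perm_image_symm_eq_of_card_eq S hT.1.2]
  congr 1
  exact filter_congr fun σ _ => ⟨And.right, fun h => ⟨h ▸ hT.2, h⟩⟩

theorem toReal_uniformOfFintype_perm_image_symm {_ : MeasurableSpace (Perm α)}
    (S : Finset α) (P : Finset α → Prop) [DecidablePred P]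
    (hP : MeasurableSet {σ : Perm α | P (S.image σ.symm)}) :
    ((PMF.uniformOfFintype (Perm α)).toMeasure {σ : Perm α | P (S.image σ.symm)}).toReal =
      #{T ∈ powersetCard #S univ | P T} / (Fintype.card α).choose #S := by
  have hall := card_perm_filter_image_symm_eq_mul S fun _ => True
  simp only [filter_true, card_univ, card_powersetCard, Fintype.card_perm] at hall
  have hpos : 0 < #{σ : Perm α | S.image σ.symm = S} := card_pos.mpr ⟨1, by simp [← Perm.inv_def]⟩
  rw [PMF.toMeasure_uniformOfFintype_apply _ hP, ENNReal.toReal_div, ENNReal.toReal_natCast,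
    ENNReal.toReal_natCast, Fintype.card_perm, hall, Fintype.card_subtype]
  simp only [Set.mem_ofPred_eq]
  rw [card_perm_filter_image_symm_eq_mul]
  push_cast
  field_simp

end UniformSubset

open Classical in
theorem card_powersetCard_succ_filter_isLeast {α : Type*} [Fintype α] [LinearOrder α]
    [LocallyFiniteOrderTop α] (a : α) (k : ℕ) :
    #((powersetCard (k + 1) univ).filter fun T : Finset α => IsLeast ↑T a) =
      (#(Ioi a)).choose k := by
  have ha : a ∉ Ioi a := by simp
  have hinsert : (powersetCard (k + 1) univ).filter (fun T : Finset α => IsLeast ↑T a) =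
      (powersetCard k (Ioi a)).image (insert a) := by
    ext T
    simp only [mem_filter, mem_powersetCard, mem_image, subset_univ, true_and]
    constructor
    · rintro ⟨hcard, haT, hle⟩
      refine ⟨T.erase a, ⟨fun t ht => ?_, by rw [card_erase_of_mem haT, hcard]; rfl⟩,
        insert_erase haT⟩
      obtain ⟨hta, htT⟩ := mem_erase.mp ht
      exact mem_Ioi.mpr (lt_of_le_of_ne (hle htT) (Ne.symm hta))
    · rintro ⟨U, ⟨hU, hcard⟩, rfl⟩
      refine ⟨by rw [card_insert_of_notMem fun h => ha (hU h), hcard], by simp, ?_⟩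
      intro t ht
      rcases mem_insert.mp ht with rfl | ht
      · exact le_rfl
      · exact (mem_Ioi.mp (hU ht)).le
  rw [hinsert, card_image_of_injOn, card_powersetCard]
  intro U hU V hV hUV
  have hnotin (W : Finset α) (hW : W ∈ (powersetCard k (Ioi a) : Set _)) : a ∉ W :=
    fun h => ha ((mem_powersetCard.mp hW).1 h)
  rw [← erase_insert (hnotin U hU), ← erase_insert (hnotin V hV)]
  exact congrArg (·.erase a) hUV

theorem choose_sub_div_choose_eq_prod {n k x : ℕ} (h : x + k ≤ n) :
    ((n - x).choose k : ℝ) / n.choose k = ∏ j ∈ range x, (1 - (k : ℝ) / ((n : ℝ) - j)) := by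
  have hC : (n.choose k : ℝ) ≠ 0 := by exact_mod_cast (Nat.choose_pos (by omega)).ne'
  induction x with
  | zero => simp [hC]
  | succ x ih =>
    rw [prod_range_succ, ← ih (by omega)]
    obtain ⟨m, hm⟩ : ∃ m, n - x = m + 1 := ⟨n - x - 1, by omega⟩
    have hrec := congrArg (Nat.cast : ℕ → ℝ) (Nat.choose_mul_succ_eq m k)
    push_cast [Nat.cast_sub (show k ≤ m + 1 by omega)] at hrec
    have hnx : (n : ℝ) - x = m + 1 := by
      rw [← Nat.cast_sub (by omega), hm]; push_cast; ring
    rw [show n - (x + 1) = m by omega, hm, hnx]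
    field_simp
    linear_combination hrec

theorem choose_pred_div_choose_eq {n k x : ℕ} (hk : 1 ≤ k) (h : x + k ≤ n) :
    ((n - 1 - x).choose (k - 1) : ℝ) / n.choose k =
      (k : ℝ) / ((n : ℝ) - x) * ∏ j ∈ range x, (1 - (k : ℝ) / ((n : ℝ) - j)) := by
  have hpascal := Nat.add_one_mul_choose_eq (n - 1 - x) (k - 1)
  rw [show n - 1 - x + 1 = n - x by omega, Nat.sub_add_cancel hk] at hpascal
  have hnx : ((n - x : ℕ) : ℝ) = (n : ℝ) - x := Nat.cast_sub (by omega)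
  have hnx0 : ((n - x : ℕ) : ℝ) ≠ 0 := by exact_mod_cast (by omega : n - x ≠ 0)
  have hC : (n.choose k : ℝ) ≠ 0 := by exact_mod_cast (Nat.choose_pos (by omega)).ne'
  rw [← choose_sub_div_choose_eq_prod h, ← hnx]
  field_simp
  norm_cast
  linarith [hpascal]

theorem iInf_val_symm_eq_iff_isLeast_image {N : ℕ} (S : Finset (Fin N)) [Nonempty S]
    (σ : Perm (Fin N)) {x : ℕ} (hx : x < N) :
    (⨅ s : S, ((σ.symm s.1 : Fin N) : ℕ)) = x ↔ IsLeast ↑(S.image σ.symm) (⟨x, hx⟩ : Fin N) := by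
  rw [ciInf_eq_iff]
  simp only [IsLeast, mem_lowerBounds, mem_coe, forall_mem_image]
  simp only [mem_image, Fin.ext_iff, Fin.le_def, Subtype.exists, Subtype.forall, exists_prop]

theorem prob_sdn_first_position_eq_general
    (N k : ℕ) (hk : 1 ≤ k) (hkN : k ≤ N)
    (S : Finset (Fin N)) (hS : S.card = k)
    (x : ℕ) (hx : x ≤ N - k) :
    (@PMF.toMeasure _ ⊤ (PMF.uniformOfFintype (Equiv.Perm (Fin N)))
        {σ : Equiv.Perm (Fin N) | (⨅ s : S, ((σ.symm s.1 : Fin N) : ℕ)) = x}).toReal =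
      ((k : ℝ) / ((N : ℝ) - x)) * ∏ j ∈ Finset.range x, (1 - (k : ℝ) / ((N : ℝ) - j)) := by
  classical
  have hxN : x < N := by omega
  have : Nonempty S := (card_pos.mp (hS ▸ hk)).to_subtype
  have hevent : {σ : Perm (Fin N) | (⨅ s : S, ((σ.symm s.1 : Fin N) : ℕ)) = x} =
      {σ | IsLeast ↑(S.image σ.symm) (⟨x, hxN⟩ : Fin N)} :=
    Set.ext fun σ => iInf_val_symm_eq_iff_isLeast_image S σ hxN
  rw [hevent, toReal_uniformOfFintype_perm_image_symm S (fun T => IsLeast ↑T (⟨x, hxN⟩ : Fin N))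
      (MeasurableSpace.measurableSet_top),
    ← choose_pred_div_choose_eq hk (by omega), hS, Fintype.card_fin]
  obtain ⟨j, rfl⟩ : ∃ j, k = j + 1 := ⟨k - 1, by omega⟩
  rw [card_powersetCard_succ_filter_isLeast, Fin.card_Ioi, Nat.add_sub_cancel]

/-- Theorem 2 of the paper: in a uniformly random reception order (permutation) of the `N`
ASes, the probability that the first (0-indexed) position occupied by an element of the SDN
cluster `S` (of size `k`) equals `x` is `P_sdn(x) = (k/(N-x)) * ∏_{j=0}^{x-1} (1 - k/(N-j))`. -/
theorem prob_sdn_first_position_eq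
    (N k : ℕ) (hN : 1 ≤ N) (hk : 1 ≤ k) (hkN : k ≤ N)
    (S : Finset (Fin N)) (hS : S.card = k)
    (x : ℕ) (hx : x ≤ N - k) :
    (@PMF.toMeasure _ ⊤ (PMF.uniformOfFintype (Equiv.Perm (Fin N)))
        {σ : Equiv.Perm (Fin N) | (⨅ s : S, ((σ.symm s.1 : Fin N) : ℕ)) = x}).toReal =
      ((k : ℝ) / ((N : ℝ) - x)) * ∏ j ∈ Finset.range x, (1 - (k : ℝ) / ((N : ℝ) - j)) :=
  prob_sdn_first_position_eq_general N k hk hkN S hS x hx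
end
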